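/- Let Ω ⊆ ℝᵈ be a bounded measurable set and let k ∈ L¹(ℝᵈ). Then the linear operator J on L²(Ω) defined by J[v](x) = ∫_Ω k(x-y) v(y) dy is a compact operator from L²(Ω) to L²(Ω). -/

import Mathlib

/-!
Young's inequality `‖k ⋆ v‖₂ ≤ ‖k‖₁ ‖v‖₂` on `Ω`, proved by the Schur test (Cauchy–Schwarz against
the weight `|k(x - y)|`, then Tonelli and translation invariance), gives `‖J_k - J_g‖ ≤ ‖k - g‖₁`.
For a bounded uniformly continuous kernel the functions `J_k v`, `‖v‖ ≤ 1`, are uniformly bounded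
and equicontinuous on the compact set `closure Ω`, so by Arzelà–Ascoli they form a totally bounded
set for the sup norm, which dominates the `L²(Ω)` norm; hence `J_k` is compact. Continuous
compactly supported kernels are dense in `L¹`, and compact operators form a closed set.
-/

open MeasureTheory Set Bornology
open scoped ENNReal NNReal

theorem ENNReal.lintegral_mul_sq_le {α : Type*} [MeasurableSpace α] {μ : Measure α}
    {f g : α → ℝ≥0∞} (hf : AEMeasurable f μ) (hfg : AEMeasurable (fun a => f a * g a ^ 2) μ) :
    (∫⁻ a, f a * g a ∂μ) ^ 2 ≤ (∫⁻ a, f a ∂μ) * ∫⁻ a, f a * g a ^ 2 ∂μ := by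
  have hsqrt_sq (x : ℝ≥0∞) : (x ^ (2⁻¹ : ℝ)) ^ 2 = x := by
    simpa using ENNReal.rpow_inv_natCast_pow two_ne_zero x
  have hsq_sqrt (x : ℝ≥0∞) : (x ^ 2) ^ (2⁻¹ : ℝ) = x := by
    simpa using ENNReal.pow_rpow_inv_natCast two_ne_zero x
  have hsplit (a : α) : f a ^ (2⁻¹ : ℝ) * (f a * g a ^ 2) ^ (2⁻¹ : ℝ) = f a * g a := by
    rw [ENNReal.mul_rpow_of_nonneg _ _ (by norm_num), hsq_sqrt, ← mul_assoc, ← sq, hsqrt_sq]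
  have hholder := ENNReal.lintegral_mul_norm_pow_le hf hfg (p := 2⁻¹) (q := 2⁻¹) (by norm_num)
    (by norm_num) (by norm_num)
  simp_rw [hsplit] at hholder
  calc (∫⁻ a, f a * g a ∂μ) ^ 2
      ≤ ((∫⁻ a, f a ∂μ) ^ (2⁻¹ : ℝ) * (∫⁻ a, f a * g a ^ 2 ∂μ) ^ (2⁻¹ : ℝ)) ^ 2 := by gcongr
    _ = (∫⁻ a, f a ∂μ) * ∫⁻ a, f a * g a ^ 2 ∂μ := by rw [mul_pow, hsqrt_sq, hsqrt_sq]

theorem eLpNorm_two_sq {α : Type*} [MeasurableSpace α] (f : α → ℝ) (μ : Measure α) :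
    eLpNorm f 2 μ ^ 2 = ∫⁻ a, ‖f a‖ₑ ^ 2 ∂μ := by
  simpa using eLpNorm_nnreal_pow_eq_lintegral (f := f) (μ := μ) (p := 2) two_ne_zero

theorem MeasureTheory.Lp.norm_two_le_of_ae_bound {α : Type*} [MeasurableSpace α] {ν : Measure α}
    [IsFiniteMeasure ν] {f : Lp ℝ 2 ν} {C : ℝ} (hC0 : 0 ≤ C) (hC : ∀ᵐ x ∂ν, ‖f x‖ ≤ C) :
    ‖f‖ ≤ √(ν.real univ) * C :=
  (Lp.norm_le_of_ae_bound hC0 hC).trans_eq <| by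
    simp [Real.sqrt_eq_rpow, measureUnivNNReal, Measure.real, ENNReal.coe_toNNReal_eq_toReal]

theorem abs_integral_mul_le {α : Type*} [MeasurableSpace α] {ν : Measure α} [IsFiniteMeasure ν]
    {h : α → ℝ} {C : ℝ} (hh : AEStronglyMeasurable h ν) (hC0 : 0 ≤ C) (hC : ∀ᵐ y ∂ν, ‖h y‖ ≤ C)
    (v : Lp ℝ 2 ν) :
    |∫ y, h y * v y ∂ν| ≤ √(ν.real univ) * C * ‖v‖ := by
  have hh₂ : MemLp h 2 ν := .of_bound hh C hC
  calc |∫ y, h y * v y ∂ν| = |inner ℝ hh₂.toLp v| := by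
        rw [L2.inner_def]
        congr 1
        refine integral_congr_ae ?_
        filter_upwards [hh₂.coeFn_toLp] with y hy
        simp [hy, mul_comm]
    _ ≤ ‖hh₂.toLp‖ * ‖v‖ := abs_real_inner_le_norm _ _
    _ ≤ √(ν.real univ) * C * ‖v‖ := by
        gcongr
        refine Lp.norm_two_le_of_ae_bound hC0 ?_
        filter_upwards [hh₂.coeFn_toLp, hC] with y hy hCy
        rwa [hy]

theorem TotallyBounded.image_of_dist_le {α β γ : Type*} [PseudoMetricSpace β]
    [PseudoMetricSpace γ] {f : α → β} {g : α → γ} {s : Set α} {c : ℝ}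
    (hg : TotallyBounded (g '' s))
    (hfg : ∀ a ∈ s, ∀ b ∈ s, dist (f a) (f b) ≤ c * dist (g a) (g b)) :
    TotallyBounded (f '' s) := by
  rw [Metric.totallyBounded_iff]
  intro ε hε
  obtain ⟨t, hts, htfin, hcover⟩ := Set.exists_subset_image_finite_and.1
    (Metric.finite_approx_of_totallyBounded hg (ε / (|c| + 1)) (by positivity))
  refine ⟨f '' t, htfin.image f, ?_⟩
  rintro _ ⟨a, ha, rfl⟩
  obtain ⟨_, ⟨b, hb, rfl⟩, hab⟩ := mem_iUnion₂.1 (hcover ⟨a, ha, rfl⟩)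
  refine mem_iUnion₂.2 ⟨f b, mem_image_of_mem f hb, ?_⟩
  calc dist (f a) (f b) ≤ c * dist (g a) (g b) := hfg a ha b (hts hb)
    _ ≤ |c| * (ε / (|c| + 1)) := by
        gcongr
        · exact le_abs_self c
        · exact (Metric.mem_ball.1 hab).le
    _ < ε := by
        rw [mul_div_assoc', div_lt_iff₀ (by positivity)]
        nlinarith

/-- The nonlocal operator `J_k` on functions; `restrictConvCLM` is its realization on `L²(Ω)`. -/
noncomputable def restrictConv {G : Type*} [MeasurableSpace G] [Sub G] (μ : Measure G)
    (Ω : Set G) (k v : G → ℝ) (x : G) : ℝ :=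
  ∫ y in Ω, k (x - y) * v y ∂μ

section Young

variable {G : Type*} [MeasurableSpace G] [AddCommGroup G] {μ : Measure G} {Ω : Set G}
  {k k' v w : G → ℝ}

theorem enorm_restrictConv_le (x : G) :
    ‖restrictConv μ Ω k v x‖ₑ ≤ ∫⁻ y in Ω, ‖k (x - y)‖ₑ * ‖v y‖ₑ ∂μ :=
  (enorm_integral_le_lintegral_enorm _).trans_eq (by simp_rw [enorm_mul])

theorem restrictConv_congr_ae (h : v =ᵐ[μ.restrict Ω] w) :
    restrictConv μ Ω k v = restrictConv μ Ω k w :=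
  funext fun x => integral_congr_ae (h.mono fun y hy => by simp only [hy])

theorem restrictConv_smul (c : ℝ) :
    restrictConv μ Ω k (c • v) = c • restrictConv μ Ω k v := by
  ext x
  simp only [restrictConv, Pi.smul_apply, smul_eq_mul, mul_left_comm _ c, integral_const_mul]

variable [MeasurableAdd₂ G] [μ.IsAddLeftInvariant]

theorem setLIntegral_comp_sub_right_le (f : G → ℝ≥0∞) (y : G) :
    ∫⁻ x in Ω, f (x - y) ∂μ ≤ ∫⁻ z, f z ∂μ :=
  (setLIntegral_le_lintegral _ _).trans_eq <| (measurePreserving_sub_right μ y).lintegral_comp_emb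
    (MeasurableEquiv.subRight y).measurableEmbedding f

variable [MeasurableNeg G]

theorem setLIntegral_comp_sub_left_le [μ.IsNegInvariant] (f : G → ℝ≥0∞) (x : G) :
    ∫⁻ y in Ω, f (x - y) ∂μ ≤ ∫⁻ z, f z ∂μ :=
  (setLIntegral_le_lintegral _ _).trans_eq <|
    (Measure.measurePreserving_sub_left μ x).lintegral_comp_emb
      (MeasurableEquiv.subLeft x).measurableEmbedding f

variable [SFinite μ]

theorem quasiMeasurePreserving_sub_restrict_prod (Ω : Set G) :
    Measure.QuasiMeasurePreserving (fun p : G × G => p.1 - p.2)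
      ((μ.restrict Ω).prod (μ.restrict Ω)) μ := by
  refine (quasiMeasurePreserving_sub μ μ).mono ?_ .rfl
  rw [Measure.prod_restrict]
  exact Measure.restrict_le_self.absolutelyContinuous

theorem aestronglyMeasurable_comp_sub_mul_prod (hk : AEStronglyMeasurable k μ)
    (hv : AEStronglyMeasurable v (μ.restrict Ω)) :
    AEStronglyMeasurable (fun p : G × G => k (p.1 - p.2) * v p.2)
      ((μ.restrict Ω).prod (μ.restrict Ω)) :=
  (hk.comp_quasiMeasurePreserving (quasiMeasurePreserving_sub_restrict_prod Ω)).mul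
    (hv.comp_quasiMeasurePreserving Measure.quasiMeasurePreserving_snd)

variable [μ.IsNegInvariant]

theorem setLIntegral_sq_conv_le {K V : G → ℝ≥0∞} (hK : AEMeasurable K μ)
    (hV : AEMeasurable V (μ.restrict Ω)) :
    ∫⁻ x in Ω, (∫⁻ y in Ω, K (x - y) * V y ∂μ) ^ 2 ∂μ
      ≤ (∫⁻ z, K z ∂μ) ^ 2 * ∫⁻ y in Ω, V y ^ 2 ∂μ := by
  have hprod : AEMeasurable (Function.uncurry fun x y => K (x - y) * V y ^ 2)
      ((μ.restrict Ω).prod (μ.restrict Ω)) :=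
    (hK.comp_quasiMeasurePreserving (quasiMeasurePreserving_sub_restrict_prod Ω)).mul
      ((hV.comp_quasiMeasurePreserving Measure.quasiMeasurePreserving_snd).pow_const 2)
  have hleft (x : G) : AEMeasurable (fun y => K (x - y)) (μ.restrict Ω) :=
    (hK.comp_quasiMeasurePreserving
      (Measure.measurePreserving_sub_left μ x).quasiMeasurePreserving).restrict
  have hright (y : G) : AEMeasurable (fun x => K (x - y)) (μ.restrict Ω) :=
    (hK.comp_quasiMeasurePreserving
      (measurePreserving_sub_right μ y).quasiMeasurePreserving).restrict
  calc ∫⁻ x in Ω, (∫⁻ y in Ω, K (x - y) * V y ∂μ) ^ 2 ∂μ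
      ≤ ∫⁻ x in Ω, (∫⁻ z, K z ∂μ) * ∫⁻ y in Ω, K (x - y) * V y ^ 2 ∂μ ∂μ := by
        refine lintegral_mono fun x => ?_
        grw [ENNReal.lintegral_mul_sq_le (hleft x) ((hleft x).mul (hV.pow_const 2)),
          setLIntegral_comp_sub_left_le]
    _ = (∫⁻ z, K z ∂μ) * ∫⁻ y in Ω, ∫⁻ x in Ω, K (x - y) * V y ^ 2 ∂μ ∂μ := by
        rw [lintegral_const_mul'' _ (by exact hprod.lintegral_prod_right'),
          lintegral_lintegral_swap hprod]
    _ ≤ (∫⁻ z, K z ∂μ) * ∫⁻ y in Ω, (∫⁻ z, K z ∂μ) * V y ^ 2 ∂μ := by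
        gcongr with y
        rw [lintegral_mul_const'' _ (hright y)]
        grw [setLIntegral_comp_sub_right_le]
    _ = (∫⁻ z, K z ∂μ) ^ 2 * ∫⁻ y in Ω, V y ^ 2 ∂μ := by
        rw [lintegral_const_mul'' _ (hV.pow_const 2), sq, mul_assoc]

theorem eLpNorm_restrictConv_le (hk : AEStronglyMeasurable k μ)
    (hv : AEStronglyMeasurable v (μ.restrict Ω)) :
    eLpNorm (restrictConv μ Ω k v) 2 (μ.restrict Ω)
      ≤ eLpNorm k 1 μ * eLpNorm v 2 (μ.restrict Ω) := by
  rw [← ENNReal.pow_le_pow_left_iff two_ne_zero, mul_pow, eLpNorm_two_sq, eLpNorm_two_sq,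
    eLpNorm_one_eq_lintegral_enorm]
  calc ∫⁻ x in Ω, ‖restrictConv μ Ω k v x‖ₑ ^ 2 ∂μ
      ≤ ∫⁻ x in Ω, (∫⁻ y in Ω, ‖k (x - y)‖ₑ * ‖v y‖ₑ ∂μ) ^ 2 ∂μ := by
        gcongr with x
        exact enorm_restrictConv_le x
    _ ≤ _ := setLIntegral_sq_conv_le hk.enorm hv.enorm

theorem memLp_restrictConv (hk : Integrable k μ) (hv : MemLp v 2 (μ.restrict Ω)) :
    MemLp (restrictConv μ Ω k v) 2 (μ.restrict Ω) :=
  ⟨(aestronglyMeasurable_comp_sub_mul_prod hk.1 hv.1).integral_prod_right',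
    (eLpNorm_restrictConv_le hk.1 hv.1).trans_lt
      (ENNReal.mul_lt_top (memLp_one_iff_integrable.2 hk).2 hv.2)⟩

theorem ae_integrable_comp_sub_mul (hk : Integrable k μ) (hv : MemLp v 2 (μ.restrict Ω)) :
    ∀ᵐ x ∂μ.restrict Ω, Integrable (fun y => k (x - y) * v y) (μ.restrict Ω) := by
  have hmeas : AEMeasurable (fun x => (∫⁻ y in Ω, ‖k (x - y)‖ₑ * ‖v y‖ₑ ∂μ) ^ 2)
      (μ.restrict Ω) := by
    refine AEMeasurable.pow_const ?_ 2
    simpa only [enorm_mul] using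
      (aestronglyMeasurable_comp_sub_mul_prod hk.1 hv.1).enorm.lintegral_prod_right'
  have hfin : ∫⁻ x in Ω, (∫⁻ y in Ω, ‖k (x - y)‖ₑ * ‖v y‖ₑ ∂μ) ^ 2 ∂μ ≠ ∞ := by
    refine ((setLIntegral_sq_conv_le hk.1.enorm hv.1.enorm).trans_lt ?_).ne
    rw [← eLpNorm_two_sq]
    exact ENNReal.mul_lt_top (ENNReal.pow_lt_top hk.2) (ENNReal.pow_lt_top hv.2)
  filter_upwards [ae_lt_top' hmeas hfin] with x hx
  refine ⟨(hk.1.comp_quasiMeasurePreserving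
    (Measure.measurePreserving_sub_left μ x).quasiMeasurePreserving).restrict.mul hv.1, ?_⟩
  simpa only [HasFiniteIntegral, enorm_mul, ENNReal.pow_lt_top_iff, two_ne_zero, or_false]
    using hx

theorem restrictConv_add_ae (hk : Integrable k μ) (hv : MemLp v 2 (μ.restrict Ω))
    (hw : MemLp w 2 (μ.restrict Ω)) :
    restrictConv μ Ω k (v + w) =ᵐ[μ.restrict Ω] restrictConv μ Ω k v + restrictConv μ Ω k w := by
  filter_upwards [ae_integrable_comp_sub_mul hk hv, ae_integrable_comp_sub_mul hk hw]
    with x hvx hwx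
  simp only [restrictConv, Pi.add_apply, mul_add, integral_add hvx hwx]

theorem restrictConv_sub_ae (hk : Integrable k μ) (hk' : Integrable k' μ)
    (hv : MemLp v 2 (μ.restrict Ω)) :
    restrictConv μ Ω (k - k') v =ᵐ[μ.restrict Ω] restrictConv μ Ω k v - restrictConv μ Ω k' v := by
  filter_upwards [ae_integrable_comp_sub_mul hk hv, ae_integrable_comp_sub_mul hk' hv]
    with x hkx hk'x
  simp only [restrictConv, Pi.sub_apply, sub_mul, integral_sub hkx hk'x]

variable (μ Ω) in
noncomputable def restrictConvCLM (k : G → ℝ) (hk : Integrable k μ) :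
    Lp ℝ 2 (μ.restrict Ω) →L[ℝ] Lp ℝ 2 (μ.restrict Ω) :=
  LinearMap.mkContinuous
    { toFun := fun v => (memLp_restrictConv hk (Lp.memLp v)).toLp
      map_add' := fun v w => by
        rw [← MemLp.toLp_add, MemLp.toLp_eq_toLp_iff, restrictConv_congr_ae (Lp.coeFn_add v w)]
        exact restrictConv_add_ae hk (Lp.memLp v) (Lp.memLp w)
      map_smul' := fun c v => by
        rw [RingHom.id_apply, ← MemLp.toLp_const_smul, MemLp.toLp_eq_toLp_iff,
          restrictConv_congr_ae (Lp.coeFn_smul c v), restrictConv_smul] }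
    (eLpNorm k 1 μ).toReal fun v => by
      rw [LinearMap.coe_mk, AddHom.coe_mk, Lp.norm_toLp, Lp.norm_def, ← ENNReal.toReal_mul]
      exact ENNReal.toReal_mono (ENNReal.mul_ne_top (memLp_one_iff_integrable.2 hk).2.ne
        (Lp.eLpNorm_ne_top v)) (eLpNorm_restrictConv_le hk.1 (Lp.aestronglyMeasurable v))

theorem coeFn_restrictConvCLM (hk : Integrable k μ) (v : Lp ℝ 2 (μ.restrict Ω)) :
    restrictConvCLM μ Ω k hk v =ᵐ[μ.restrict Ω] restrictConv μ Ω k v :=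
  MemLp.coeFn_toLp (memLp_restrictConv hk (Lp.memLp v))

theorem norm_restrictConvCLM_le (hk : Integrable k μ) :
    ‖restrictConvCLM μ Ω k hk‖ ≤ (eLpNorm k 1 μ).toReal :=
  LinearMap.mkContinuous_norm_le _ ENNReal.toReal_nonneg _

theorem restrictConvCLM_sub (hk : Integrable k μ) (hk' : Integrable k' μ) :
    restrictConvCLM μ Ω (k - k') (hk.sub hk')
      = restrictConvCLM μ Ω k hk - restrictConvCLM μ Ω k' hk' := by
  ext1 v
  refine Lp.ext ?_
  filter_upwards [coeFn_restrictConvCLM (hk.sub hk') v,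
    Lp.coeFn_sub (restrictConvCLM μ Ω k hk v) (restrictConvCLM μ Ω k' hk' v),
    coeFn_restrictConvCLM hk v, coeFn_restrictConvCLM hk' v,
    restrictConv_sub_ae hk hk' (Lp.memLp v)] with x h h' hkx hk'x hsub
  rw [sub_apply, h, h', Pi.sub_apply, hkx, hk'x, hsub, Pi.sub_apply]

theorem norm_restrictConvCLM_sub_le (hk : Integrable k μ) (hk' : Integrable k' μ) :
    ‖restrictConvCLM μ Ω k hk - restrictConvCLM μ Ω k' hk'‖ ≤ (eLpNorm (k - k') 1 μ).toReal :=
  restrictConvCLM_sub hk hk' ▸ norm_restrictConvCLM_le (hk.sub hk')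

end Young

section Compact

variable {G : Type*} [NormedAddCommGroup G] [MeasurableSpace G] [BorelSpace G]
  {μ : Measure G} [μ.IsAddLeftInvariant] [μ.IsNegInvariant] {Ω : Set G} {k : G → ℝ} {C : ℝ}

section FiniteMeasure

variable [IsFiniteMeasure (μ.restrict Ω)] (hk : AEStronglyMeasurable k μ) (hkC : ∀ z, ‖k z‖ ≤ C)
include hk hkC

theorem norm_restrictConv_le (v : Lp ℝ 2 (μ.restrict Ω)) (x : G) :
    ‖restrictConv μ Ω k v x‖ ≤ √((μ.restrict Ω).real univ) * C * ‖v‖ :=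
  abs_integral_mul_le (hk.comp_quasiMeasurePreserving
      (Measure.measurePreserving_sub_left μ x).quasiMeasurePreserving).restrict
    ((norm_nonneg _).trans (hkC 0)) (ae_of_all _ fun _ => hkC _) v

theorem dist_restrictConv_le (v : Lp ℝ 2 (μ.restrict Ω)) {x x' : G} {ε : ℝ} (hε0 : 0 ≤ ε)
    (hε : ∀ y, ‖k (x - y) - k (x' - y)‖ ≤ ε) :
    dist (restrictConv μ Ω k v x) (restrictConv μ Ω k v x')
      ≤ √((μ.restrict Ω).real univ) * ε * ‖v‖ := by
  have hslice (x : G) : AEStronglyMeasurable (fun y => k (x - y)) (μ.restrict Ω) :=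
    (hk.comp_quasiMeasurePreserving
      (Measure.measurePreserving_sub_left μ x).quasiMeasurePreserving).restrict
  have hint (x : G) : Integrable (fun y => k (x - y) * v y) (μ.restrict Ω) :=
    ((Lp.memLp v).integrable one_le_two).bdd_mul (hslice x) (ae_of_all _ fun y => hkC _)
  rw [dist_eq_norm, restrictConv, restrictConv, ← integral_sub (hint x) (hint x')]
  simp_rw [← sub_mul]
  exact abs_integral_mul_le ((hslice x).sub (hslice x')) hε0 (ae_of_all _ hε) v

theorem exists_forall_dist_restrictConv_lt (hku : UniformContinuous k) {r ε : ℝ} (hr : 0 ≤ r)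
    (hε : 0 < ε) :
    ∃ δ > 0, ∀ x x', dist x x' < δ → ∀ v : Lp ℝ 2 (μ.restrict Ω), ‖v‖ ≤ r →
      dist (restrictConv μ Ω k v x) (restrictConv μ Ω k v x') < ε := by
  set m := √((μ.restrict Ω).real univ)
  obtain ⟨δ, hδ, hkδ⟩ := Metric.uniformContinuous_iff.1 hku (ε / (m * r + 1)) (by positivity)
  refine ⟨δ, hδ, fun x x' hxx' v hv => ?_⟩
  calc dist (restrictConv μ Ω k v x) (restrictConv μ Ω k v x')
      ≤ m * (ε / (m * r + 1)) * ‖v‖ := by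
        refine dist_restrictConv_le hk hkC v (by positivity) fun y => ?_
        rw [← dist_eq_norm]
        exact (hkδ (by rwa [dist_sub_right])).le
    _ ≤ m * (ε / (m * r + 1)) * r := by gcongr
    _ = ε * (m * r / (m * r + 1)) := by ring
    _ < ε := mul_lt_of_lt_one_right hε ((div_lt_one (by positivity)).2 (lt_add_one _))

theorem continuous_restrictConv (hku : UniformContinuous k) (v : Lp ℝ 2 (μ.restrict Ω)) :
    Continuous (restrictConv μ Ω k v) :=
  (Metric.uniformContinuous_iff.2 fun _ hε =>
    (exists_forall_dist_restrictConv_lt hk hkC hku (norm_nonneg v) hε).imp fun _ ⟨hδ, h⟩ =>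
      ⟨hδ, fun x x' hxx' => h x x' hxx' v le_rfl⟩).continuous

end FiniteMeasure

variable [ProperSpace G]

theorem isCompactOperator_restrictConvCLM_of_uniformContinuous [IsFiniteMeasureOnCompacts μ]
    (hΩ : IsBounded Ω) (hk : Integrable k μ) (hkC : ∀ z, ‖k z‖ ≤ C) (hku : UniformContinuous k) :
    IsCompactOperator (restrictConvCLM μ Ω k hk) := by
  have : IsFiniteMeasure (μ.restrict Ω) := isFiniteMeasure_restrict.2 hΩ.measure_lt_top.ne
  have : CompactSpace (closure Ω) := isCompact_iff_compactSpace.1 hΩ.isCompact_closure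
  set m := √((μ.restrict Ω).real univ)
  set T := restrictConvCLM μ Ω k hk
  let P : Lp ℝ 2 (μ.restrict Ω) → BoundedContinuousFunction (closure Ω) ℝ := fun v =>
    .mkOfCompact ⟨fun z => restrictConv μ Ω k v z,
      (continuous_restrictConv hk.1 hkC hku v).comp continuous_subtype_val⟩
  have hP : IsCompact (closure (P '' Metric.closedBall 0 1)) := by
    refine BoundedContinuousFunction.arzela_ascoli (Metric.closedBall 0 (m * C))
      (isCompact_closedBall _ _) _ ?_ ?_
    · rintro _ z ⟨v, hv, rfl⟩
      rw [mem_closedBall_zero_iff]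
      refine (norm_restrictConv_le hk.1 hkC v z).trans (mul_le_of_le_one_right ?_ ?_)
      · exact mul_nonneg (Real.sqrt_nonneg _) ((norm_nonneg _).trans (hkC 0))
      · exact mem_closedBall_zero_iff.1 hv
    · refine (Metric.uniformEquicontinuous_iff.2 fun ε hε => ?_).equicontinuous
      obtain ⟨δ, hδ, h⟩ := exists_forall_dist_restrictConv_lt (Ω := Ω) hk.1 hkC hku zero_le_one hε
      exact ⟨δ, hδ, fun z z' hzz' ⟨_, v, hv, hPv⟩ =>
        hPv ▸ h z z' hzz' v (mem_closedBall_zero_iff.1 hv)⟩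
  have hTP (v w : Lp ℝ 2 (μ.restrict Ω)) : dist (T v) (T w) ≤ m * dist (P v) (P w) := by
    rw [dist_eq_norm]
    refine Lp.norm_two_le_of_ae_bound dist_nonneg ?_
    filter_upwards [Lp.coeFn_sub (T v) (T w), coeFn_restrictConvCLM hk v,
      coeFn_restrictConvCLM hk w, ae_restrict_of_ae_restrict_of_subset subset_closure
        (ae_restrict_mem isClosed_closure.measurableSet)] with x hsub hv hw hx
    rw [hsub, Pi.sub_apply, hv, hw, ← dist_eq_norm]
    exact BoundedContinuousFunction.dist_coe_le_dist (f := P v) (g := P w) ⟨x, hx⟩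
  have hT : TotallyBounded (T '' Metric.closedBall 0 1) :=
    (hP.totallyBounded.subset subset_closure).image_of_dist_le fun v _ w _ => hTP v w
  exact (isCompactOperator_iff_isCompact_closure_image_closedBall
    (T : Lp ℝ 2 (μ.restrict Ω) →ₗ[ℝ] Lp ℝ 2 (μ.restrict Ω)) one_pos).2
    (hT.closure.isCompact_of_isClosed isClosed_closure)

theorem isCompactOperator_restrictConvCLM [μ.Regular] (hΩ : IsBounded Ω) (hk : Integrable k μ) :
    IsCompactOperator (restrictConvCLM μ Ω k hk) := by
  refine isClosed_setOfPred_isCompactOperator.closure_subset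
    (Metric.mem_closure_iff.2 fun ε hε => ?_)
  obtain ⟨g, hg_supp, hkg, hg_cont, -⟩ :=
    (memLp_one_iff_integrable.2 hk).exists_hasCompactSupport_eLpNorm_sub_le ENNReal.one_ne_top
      (ε := ENNReal.ofReal (ε / 2)) (by simpa using hε)
  have hg : Integrable g μ := hg_cont.integrable_of_hasCompactSupport hg_supp
  obtain ⟨C, hC⟩ := hg_cont.bounded_above_of_compact_support hg_supp
  refine ⟨restrictConvCLM μ Ω g hg, isCompactOperator_restrictConvCLM_of_uniformContinuous hΩ hg hC
    (hg_supp.uniformContinuous_of_continuous hg_cont), ?_⟩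
  calc dist (restrictConvCLM μ Ω k hk) (restrictConvCLM μ Ω g hg)
      ≤ (eLpNorm (k - g) 1 μ).toReal :=
        (dist_eq_norm _ _).trans_le (norm_restrictConvCLM_sub_le hk hg)
    _ ≤ ε / 2 := ENNReal.toReal_le_of_le_ofReal (by positivity) hkg
    _ < ε := half_lt_self hε

end Compact

theorem stmt_6_general (d : ℕ) (Ω : Set (Fin d → ℝ))
    (hbd : Bornology.IsBounded Ω)
    (k : (Fin d → ℝ) → ℝ) (hk : Integrable k) :
    ∃ T : Lp ℝ 2 (volume.restrict Ω) →L[ℝ] Lp ℝ 2 (volume.restrict Ω),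
      IsCompactOperator T ∧
      ∀ v : Lp ℝ 2 (volume.restrict Ω),
        (T v : (Fin d → ℝ) → ℝ) =ᵐ[volume.restrict Ω]
          fun x => ∫ y in Ω, k (x - y) * v y :=
  ⟨restrictConvCLM volume Ω k hk, isCompactOperator_restrictConvCLM hbd hk,
    coeFn_restrictConvCLM hk⟩

/-- For a bounded measurable `Ω ⊆ ℝᵈ` and `k ∈ L¹(ℝᵈ)`, the nonlocal operator
`J[v](x) = ∫_Ω k(x-y) v(y) dy` is a compact (bounded linear) operator on `L²(Ω)`. -/
theorem stmt_6 (d : ℕ) (Ω : Set (Fin d → ℝ)) (hΩ : MeasurableSet Ω)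
    (hbd : Bornology.IsBounded Ω)
    (k : (Fin d → ℝ) → ℝ) (hk : Integrable k) :
    ∃ T : Lp ℝ 2 (volume.restrict Ω) →L[ℝ] Lp ℝ 2 (volume.restrict Ω),
      IsCompactOperator T ∧
      ∀ v : Lp ℝ 2 (volume.restrict Ω),
        (T v : (Fin d → ℝ) → ℝ) =ᵐ[volume.restrict Ω]
          fun x => ∫ y in Ω, k (x - y) * v y :=
  stmt_6_general d Ω hbd k hk
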